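/- arXiv:1909.07279 — 2 statements merged into one kernel-verified Lean document; each statement's English description precedes it below -/
import Mathlib

section
/- For any real number t and any Δ>0, the sum over all integers k of sinc²(Δt − k) equals 1. -/
/-!
For fixed `x`, the numbers `sinc (x - k)` are the Fourier coefficients on `[-1/2, 1/2]` of the
character `ξ ↦ exp (2πixξ)`. That function has modulus one, so Parseval's identity gives
`∑ₖ sinc² (x - k) = 1`.
-/

open Real

noncomputable def sinc (x : ℝ) : ℝ := if x = 0 then 1 else Real.sin (π * x) / (π * x)

open MeasureTheory

lemma sinc_eq_sinc_pi_mul (x : ℝ) : _root_.sinc x = Real.sinc (π * x) := by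
  simp [_root_.sinc, Real.sinc_apply, Real.pi_ne_zero]

lemma norm_exp_two_pi_I_mul (x ξ : ℝ) : ‖Complex.exp (2 * π * Complex.I * x * ξ)‖ = 1 := by
  simp [Complex.norm_exp]

lemma integral_exp_two_pi_I_mul_eq_sinc (y : ℝ) :
    ∫ ξ in (-1/2 : ℝ)..1/2, Complex.exp (2 * π * Complex.I * y * ξ) = _root_.sinc y := by
  rcases eq_or_ne y 0 with rfl | hy
  · norm_num [_root_.sinc]
  have hπy : 2 * π * y ≠ 0 := by positivity
  have hy' : (y : ℂ) ≠ 0 := by exact_mod_cast hy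
  have hscale := intervalIntegral.integral_comp_mul_left (a := -1/2) (b := 1/2)
    (fun t : ℝ => Complex.exp (t * Complex.I)) hπy
  rw [show 2 * π * y * (-1/2) = -(π * y) by ring, show 2 * π * y * (1/2) = π * y by ring,
    integral_exp_mul_I_eq_sinc, Complex.real_smul] at hscale
  rw [sinc_eq_sinc_pi_mul]
  convert hscale using 1
  · congr 1; ext ξ; push_cast; ring_nf
  · push_cast
    field_simp

lemma fourierCoeffOn_exp_two_pi_I_mul (x : ℝ) (k : ℤ) :
    fourierCoeffOn (by norm_num : (-1/2 : ℝ) < 1/2)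
      (fun ξ : ℝ => Complex.exp (2 * π * Complex.I * x * ξ)) k = _root_.sinc (x - k) := by
  rw [fourierCoeffOn_eq_integral, ← integral_exp_two_pi_I_mul_eq_sinc,
    show (1/2 : ℝ) - -1/2 = 1 by norm_num, div_one, one_smul]
  congr 1; ext ξ
  rw [fourier_coe_apply, smul_eq_mul, ← Complex.exp_add]
  push_cast
  ring_nf

lemma hasSum_sinc_sq_sub_int (x : ℝ) : HasSum (fun k : ℤ => _root_.sinc (x - k) ^ 2) 1 := by
  have hL2 : MemLp (fun ξ : ℝ => Complex.exp (2 * π * Complex.I * x * ξ)) 2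
      (volume.restrict (Set.Ioc (-1/2) (1/2))) :=
    .of_bound (by fun_prop) 1 (.of_forall fun ξ => (norm_exp_two_pi_I_mul x ξ).le)
  have hparseval := hasSum_sq_fourierCoeffOn (by norm_num : (-1/2 : ℝ) < 1/2) hL2
  simp only [fourierCoeffOn_exp_two_pi_I_mul, Complex.norm_real, Real.norm_eq_abs, sq_abs,
    norm_exp_two_pi_I_mul] at hparseval
  convert hparseval using 1
  norm_num

theorem tsum_sinc_sq_eq_one_general (Δ : ℝ) (t : ℝ) :
    ∑' k : ℤ, (_root_.sinc (Δ * t - (k : ℝ)))^2 = 1 :=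
  (hasSum_sinc_sq_sub_int (Δ * t)).tsum_eq

/-- The squared-sinc partition of unity: for all t and Δ>0,
∑_{k ∈ ℤ} sinc²(Δt − k) = 1. -/
theorem tsum_sinc_sq_eq_one (Δ : ℝ) (hΔ : 0 < Δ) (t : ℝ) :
    ∑' k : ℤ, (_root_.sinc (Δ * t - (k : ℝ)))^2 = 1 :=
  tsum_sinc_sq_eq_one_general Δ t
end

section
/- The posterior variance of a centred sinc-kernel GP observed noiselessly at all points t_k = k/Δ, k ∈ ℤ, given by V(t) = σ²(1 − ∑_{k∈ℤ} sinc²(Δt − k)), is identically zero for all t ∈ ℝ. -/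
open Real

/-!
The numbers `sinc (x - n)`, `n ∈ ℤ`, are the Fourier coefficients on `(-1/2, 1/2]` of the
unimodular function `s ↦ exp (2πixs)`, so by Parseval their squares sum to the mean of
`|exp (2πixs)|² = 1`, i.e. to `1`.
-/

open Complex MeasureTheory

theorem integral_exp_two_pi_mul_I_eq_sinc (y : ℝ) :
    ∫ s in (-1/2 : ℝ)..1/2, cexp (2 * π * I * y * s) = _root_.sinc y := by
  rcases eq_or_ne y 0 with rfl | hy
  · norm_num [_root_.sinc]
  have hπ : (π : ℂ) ≠ 0 := ofReal_ne_zero.2 pi_ne_zero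
  have hy' : (y : ℂ) ≠ 0 := ofReal_ne_zero.2 hy
  have hc : 2 * π * I * y ≠ 0 := by simp [hπ, hy', I_ne_zero]
  rw [integral_exp_mul_complex hc, _root_.sinc, if_neg hy, div_eq_iff hc]
  have h₁ : 2 * π * I * y * ((1 / 2 : ℝ) : ℂ) = (π * y : ℝ) * I := by push_cast; ring
  have h₂ : 2 * π * I * y * ((-1 / 2 : ℝ) : ℂ) = -((π * y : ℝ) * I) := by push_cast; ring
  rw [h₁, h₂, exp_mul_I, ← neg_mul, exp_mul_I, Complex.cos_neg, Complex.sin_neg, ← ofReal_sin]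
  push_cast
  field_simp
  ring

theorem fourierCoeffOn_exp_two_pi_mul_I (x : ℝ) (n : ℤ) :
    fourierCoeffOn (by norm_num : (-1/2 : ℝ) < 1/2) (fun s : ℝ ↦ cexp (2 * π * I * x * s)) n =
      _root_.sinc (x - n) := by
  rw [fourierCoeffOn_eq_integral, ← integral_exp_two_pi_mul_I_eq_sinc,
    show (1 : ℝ) / (1 / 2 - -1 / 2) = 1 by norm_num, one_smul]
  refine intervalIntegral.integral_congr fun s _ ↦ ?_
  rw [fourier_coe_apply, smul_eq_mul, ← Complex.exp_add]
  push_cast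
  ring_nf

theorem norm_exp_two_pi_mul_I (x s : ℝ) : ‖cexp (2 * π * I * x * s)‖ = 1 := by
  simp [norm_exp]

theorem hasSum_sinc_sub_sq (x : ℝ) : HasSum (fun k : ℤ ↦ _root_.sinc (x - k) ^ 2) 1 := by
  have hL2 : MemLp (fun s : ℝ ↦ cexp (2 * π * I * x * s)) 2
      (volume.restrict (Set.Ioc (-1/2) (1/2))) :=
    MemLp.of_bound (by fun_prop) 1 (.of_forall fun s ↦ (norm_exp_two_pi_mul_I x s).le)
  convert hasSum_sq_fourierCoeffOn (by norm_num) hL2 using 1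
  · ext k
    rw [fourierCoeffOn_exp_two_pi_mul_I, norm_real, norm_eq_abs, sq_abs]
  · simp only [norm_exp_two_pi_mul_I]
    norm_num

theorem sinc_gp_posterior_variance_vanishes_general
    (σ2 Δ : ℝ) (t : ℝ) :
    σ2 * (1 - ∑' k : ℤ, (_root_.sinc (Δ * t - (k : ℝ)))^2) = 0 := by
  rw [(hasSum_sinc_sub_sq (Δ * t)).tsum_eq, sub_self, mul_zero]

/-- The posterior variance of a centred sinc-kernel GP under noiseless
Nyquist-rate sampling at all points k/Δ vanishes identically. -/
theorem sinc_gp_posterior_variance_vanishes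
    (σ2 Δ : ℝ) (hσ : 0 < σ2) (hΔ : 0 < Δ) (t : ℝ) :
    σ2 * (1 - ∑' k : ℤ, (_root_.sinc (Δ * t - (k : ℝ)))^2) = 0 :=
  sinc_gp_posterior_variance_vanishes_general σ2 Δ t
end
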